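/- arXiv:1305.0872 — 2 statements merged into one kernel-verified Lean document; each statement's English description precedes it below -/
import Mathlib

section
/- Let f be a smooth strictly convex function on Ω ⊆ ℝⁿ, G_f its Hessian metric, ρ = (det(D²f))^{-1/(n+2)}, and Δ the Laplace–Beltrami operator of G_f. Then Δf = n + ((n+2)/(2ρ)) ⟨∇ρ, ∇f⟩, where gradient and inner product are taken with respect to G_f. -/
open Real MeasureTheory
noncomputable section

def pd {n : ℕ} (f : (Fin n → ℝ) → ℝ) (i : Fin n) (x : Fin n → ℝ) : ℝ :=
  fderiv ℝ f x (Pi.single i 1)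

def hess {n : ℕ} (f : (Fin n → ℝ) → ℝ) (x : Fin n → ℝ) : Matrix (Fin n) (Fin n) ℝ :=
  Matrix.of fun i j => pd (pd f j) i x

def ihess {n : ℕ} (f : (Fin n → ℝ) → ℝ) (x : Fin n → ℝ) : Matrix (Fin n) (Fin n) ℝ :=
  (hess f x)⁻¹

def rho {n : ℕ} (f : (Fin n → ℝ) → ℝ) (x : Fin n → ℝ) : ℝ :=
  (hess f x).det ^ (-(1:ℝ)/(n+2))

/-- The Laplace–Beltrami operator of the Hessian metric `G_f` in coordinates:
`Δφ = (det(f_{kl}))^{-1/2} Σᵢⱼ ∂ᵢ( f^{ij} (det(f_{kl}))^{1/2} ∂ⱼφ )`. -/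
def laplaceBeltrami {n : ℕ} (f φ : (Fin n → ℝ) → ℝ) (x : Fin n → ℝ) : ℝ :=
  (Real.sqrt (hess f x).det)⁻¹ *
    ∑ i, ∑ j, pd (fun y => ihess f y i j * Real.sqrt (hess f y).det * pd φ j y) i x


/-- Inner product `⟨∇a, ∇b⟩ = Σ f^{ij} aᵢ bⱼ` with respect to `G_f`. -/
def gradInner {n : ℕ} (f a b : (Fin n → ℝ) → ℝ) (x : Fin n → ℝ) : ℝ :=
  ∑ i, ∑ j, ihess f x i j * pd a i x * pd b j x

/-! ### Auxiliary machinery -/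

/-- determinant as a continuous multilinear map in the rows -/
def detCM (m : ℕ) : ContinuousMultilinearMap ℝ (fun _ : Fin m => (Fin m → ℝ)) ℝ :=
  { (Matrix.detRowAlternating : ((Fin m → ℝ) [⋀^Fin m]→ₗ[ℝ] ℝ)).toMultilinearMap with
    cont := by
      show Continuous fun r : Fin m → Fin m → ℝ => (Matrix.of r).det
      simp only [Matrix.det_apply']
      refine continuous_finset_sum _ fun σ _ => Continuous.mul continuous_const ?_
      exact continuous_finset_prod _ fun i _ =>
        (continuous_apply i).comp (continuous_apply (σ i)) }

theorem hasFDerivAt_det' {m : ℕ} {E : Type*} [NormedAddCommGroup E] [NormedSpace ℝ E]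
    {M : E → Matrix (Fin m) (Fin m) ℝ} {M' : Fin m → Fin m → (E →L[ℝ] ℝ)} {x : E}
    (h : ∀ i j, HasFDerivAt (fun y => M y i j) (M' i j) x) :
    HasFDerivAt (fun y => (M y).det)
      ((detCM m).linearDeriv (M x) ∘L
        (ContinuousLinearMap.pi fun i => ContinuousLinearMap.pi fun j => M' i j)) x := by
  have hrows : HasFDerivAt (fun y => (fun i j => M y i j))
      (ContinuousLinearMap.pi fun i => ContinuousLinearMap.pi fun j => M' i j) x := by
    rw [hasFDerivAt_pi]
    intro i
    rw [hasFDerivAt_pi]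
    exact h i
  exact ((detCM m).hasFDerivAt (x := fun i j => M x i j)).comp x hrows

theorem det_deriv_apply {m : ℕ} {E : Type*} [NormedAddCommGroup E] [NormedSpace ℝ E]
    (M : Matrix (Fin m) (Fin m) ℝ) (M' : Fin m → Fin m → (E →L[ℝ] ℝ)) (v : E) :
    ((detCM m).linearDeriv M ∘L
        (ContinuousLinearMap.pi fun i => ContinuousLinearMap.pi fun j => M' i j)) v
      = ∑ i, (M.updateRow i (fun j => M' i j v)).det := by
  simp only [ContinuousLinearMap.comp_apply, ContinuousMultilinearMap.linearDeriv_apply]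
  erw [ContinuousMultilinearMap.linearDeriv_apply]
  exact Finset.sum_congr rfl fun i _ => rfl

lemma det_updateRow_eq {m : ℕ} (A : Matrix (Fin m) (Fin m) ℝ) (i : Fin m) (r : Fin m → ℝ) :
    (A.updateRow i r).det = ∑ j, A.adjugate j i * r j := by
  rw [← Matrix.cramer_transpose_apply, Matrix.cramer_eq_adjugate_mulVec]
  simp [Matrix.mulVec, dotProduct, ← Matrix.adjugate_transpose]

section pdlemmas
variable {n : ℕ} {Ω : Set (Fin n → ℝ)}

lemma pd_eq_of_hasFDerivAt {h : (Fin n → ℝ) → ℝ} {h' : (Fin n → ℝ) →L[ℝ] ℝ}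
    {x : Fin n → ℝ} (hd : HasFDerivAt h h' x) (i : Fin n) :
    pd h i x = h' (Pi.single i 1) := by rw [pd, hd.fderiv]

lemma contDiffOn_pd (hΩ : IsOpen Ω) {h : (Fin n → ℝ) → ℝ}
    (hh : ContDiffOn ℝ (⊤ : ℕ∞) h Ω) (i : Fin n) : ContDiffOn ℝ (⊤ : ℕ∞) (pd h i) Ω := by
  have h1 : ContDiffOn ℝ (⊤ : ℕ∞) (fderiv ℝ h) Ω := hh.fderiv_of_isOpen hΩ (by simp)
  exact (ContinuousLinearMap.apply ℝ ℝ (Pi.single i 1)).contDiff.comp_contDiffOn h1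

lemma differentiableAt_of_contDiffOn (hΩ : IsOpen Ω) {h : (Fin n → ℝ) → ℝ}
    (hh : ContDiffOn ℝ (⊤ : ℕ∞) h Ω) {x : Fin n → ℝ} (hx : x ∈ Ω) :
    DifferentiableAt ℝ h x :=
  (hh.differentiableOn (by simp)).differentiableAt (hΩ.mem_nhds hx)

lemma pd_swap (hΩ : IsOpen Ω) {h : (Fin n → ℝ) → ℝ} (hh : ContDiffOn ℝ (⊤ : ℕ∞) h Ω)
    {x : Fin n → ℝ} (hx : x ∈ Ω) (i j : Fin n) :
    pd (pd h j) i x = pd (pd h i) j x := by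
  have hfd : ContDiffOn ℝ (⊤ : ℕ∞) (fderiv ℝ h) Ω := hh.fderiv_of_isOpen hΩ (by simp)
  have hdx : DifferentiableAt ℝ (fderiv ℝ h) x :=
    (hfd.differentiableOn (by simp)).differentiableAt (hΩ.mem_nhds hx)
  have key : ∀ a b : Fin n, pd (pd h b) a x
      = fderiv ℝ (fderiv ℝ h) x (Pi.single a 1) (Pi.single b 1) := by
    intro a b
    have h2 : HasFDerivAt (fun y => fderiv ℝ h y (Pi.single b 1))
        ((ContinuousLinearMap.apply ℝ ℝ (Pi.single b 1)).comp (fderiv ℝ (fderiv ℝ h) x)) x := by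
      exact (ContinuousLinearMap.apply ℝ ℝ (Pi.single b 1)).hasFDerivAt.comp x hdx.hasFDerivAt
    have e1 : pd (pd h b) a x
        = fderiv ℝ (fun y => fderiv ℝ h y (Pi.single b 1)) x (Pi.single a 1) := rfl
    rw [e1, h2.fderiv]
    rfl
  rw [key, key]
  exact (hh.contDiffAt (hΩ.mem_nhds hx)).isSymmSndFDerivAt (by rw [minSmoothness_of_isRCLikeNormedField]; exact WithTop.coe_le_coe.mpr le_top) _ _

end pdlemmas

lemma sum3_swap {n : ℕ} (F : Fin n → Fin n → Fin n → ℝ) :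
    ∑ a, ∑ b, ∑ c, F a b c = ∑ c, ∑ b, ∑ a, F a b c := by
  calc ∑ a, ∑ b, ∑ c, F a b c
      = ∑ a, ∑ c, ∑ b, F a b c := Finset.sum_congr rfl fun a _ => Finset.sum_comm
    _ = ∑ c, ∑ a, ∑ b, F a b c := Finset.sum_comm
    _ = ∑ c, ∑ b, ∑ a, F a b c := Finset.sum_congr rfl fun c _ => Finset.sum_comm

/-- derivative of the second partial derivatives, as a continuous linear map -/
def T2 {n : ℕ} (f : (Fin n → ℝ) → ℝ) (x : Fin n → ℝ) (i j : Fin n) : (Fin n → ℝ) →L[ℝ] ℝ :=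
  fderiv ℝ (pd (pd f j) i) x

/-- derivative of the entries of the inverse Hessian -/
def A1 {n : ℕ} (f : (Fin n → ℝ) → ℝ) (x : Fin n → ℝ) (i j : Fin n) : (Fin n → ℝ) →L[ℝ] ℝ :=
  fderiv ℝ (fun y => ihess f y i j) x

/-- derivative of the Hessian determinant -/
def DdL {n : ℕ} (f : (Fin n → ℝ) → ℝ) (x : Fin n → ℝ) : (Fin n → ℝ) →L[ℝ] ℝ :=
  (detCM n).linearDeriv (hess f x) ∘L
    (ContinuousLinearMap.pi fun i => ContinuousLinearMap.pi fun j => T2 f x i j)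

/-- `Δf = n + ((n+2)/(2ρ)) ⟨∇ρ, ∇f⟩` with respect to `G_f`. -/
theorem laplaceBeltrami_self
    {n : ℕ} (Ω : Set (Fin n → ℝ)) (hΩ : IsOpen Ω)
    (f : (Fin n → ℝ) → ℝ) (hf : ContDiffOn ℝ (⊤ : ℕ∞) f Ω)
    (hpos : ∀ x ∈ Ω, (hess f x).PosDef) :
    ∀ x ∈ Ω,
      laplaceBeltrami f f x
        = n + ((n : ℝ) + 2) / (2 * rho f x) * gradInner f (rho f) f x := by
  intro x hx
  classical
  have hf1 : ∀ j, ContDiffOn ℝ (⊤ : ℕ∞) (pd f j) Ω := fun j => contDiffOn_pd hΩ hf j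
  have hf2 : ∀ i j, ContDiffOn ℝ (⊤ : ℕ∞) (pd (pd f j) i) Ω := fun i j => contDiffOn_pd hΩ (hf1 j) i
  have hDpos : 0 < (hess f x).det := (hpos x hx).det_pos
  have hDne : (hess f x).det ≠ 0 := ne_of_gt hDpos
  have hSpos : 0 < Real.sqrt (hess f x).det := Real.sqrt_pos.mpr hDpos
  have hSne : Real.sqrt (hess f x).det ≠ 0 := ne_of_gt hSpos
  have hSS : Real.sqrt (hess f x).det * Real.sqrt (hess f x).det = (hess f x).det :=
    Real.mul_self_sqrt hDpos.le
  have hunit : IsUnit (hess f x).det := isUnit_iff_ne_zero.mpr hDne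
  -- derivatives of the Hessian entries
  have hT : ∀ i j, HasFDerivAt (fun y => hess f y i j) (T2 f x i j) x := fun i j =>
    (differentiableAt_of_contDiffOn hΩ (hf2 i j) hx).hasFDerivAt
  -- derivative of the determinant
  have hdet : HasFDerivAt (fun y => (hess f y).det) (DdL f x) x := hasFDerivAt_det' hT
  have hadj : ∀ i j, (hess f x).adjugate i j = (hess f x).det * ihess f x i j := by
    intro i j
    have h2 : ihess f x i j = ((hess f x).det)⁻¹ * (hess f x).adjugate i j := by
      show (hess f x)⁻¹ i j = _
      rw [Matrix.inv_def, Ring.inverse_eq_inv]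
      simp [Matrix.smul_apply]
    rw [h2]
    field_simp
  have hDd : ∀ v, DdL f x v = ∑ i, ∑ j, (hess f x).det * ihess f x j i * T2 f x i j v := by
    intro v
    rw [DdL, det_deriv_apply]
    refine Finset.sum_congr rfl fun i _ => ?_
    rw [det_updateRow_eq]
    exact Finset.sum_congr rfl fun j _ => by rw [hadj]
  -- derivative of sqrt det
  have hS : HasFDerivAt (fun y => Real.sqrt (hess f y).det)
      ((1 / (2 * Real.sqrt (hess f x).det)) • DdL f x) x := by
    exact (Real.hasDerivAt_sqrt hDne).comp_hasFDerivAt x hdet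
  -- differentiability of the entries of the inverse Hessian
  have hadjd : ∀ i j, DifferentiableAt ℝ (fun y => (hess f y).adjugate i j) x := by
    intro i j
    have heq : (fun y => (hess f y).adjugate i j)
        = fun y => ((hess f y).updateRow j (Pi.single i 1)).det := by
      funext y; rw [Matrix.adjugate_apply]
    rw [heq]
    have hM : ∀ a b, HasFDerivAt (fun y => (hess f y).updateRow j (Pi.single i 1) a b)
        (if a = j then 0 else T2 f x a b) x := by
      intro a b
      simp only [Matrix.updateRow_apply]
      by_cases hab : a = j
      · simpa [hab] using hasFDerivAt_const ((Pi.single i 1 : Fin n → ℝ) b) x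
      · simpa [hab] using hT a b
    exact (hasFDerivAt_det' hM).differentiableAt
  have hAdiff : ∀ i j, DifferentiableAt ℝ (fun y => ihess f y i j) x := by
    intro i j
    have heq : (fun y => ihess f y i j)
        = fun y => ((hess f y).det)⁻¹ * (hess f y).adjugate i j := by
      funext y
      show (hess f y)⁻¹ i j = _
      rw [Matrix.inv_def, Ring.inverse_eq_inv]
      simp [Matrix.smul_apply]
    rw [heq]
    exact (hdet.differentiableAt.inv hDne).mul (hadjd i j)
  have hA'd : ∀ i j, HasFDerivAt (fun y => ihess f y i j) (A1 f x i j) x := fun i j =>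
    (hAdiff i j).hasFDerivAt
  -- the inverse identity on Ω
  have hinv : ∀ y ∈ Ω, ihess f y * hess f y = 1 := fun y hy =>
    Matrix.nonsing_inv_mul _ (isUnit_iff_ne_zero.mpr (ne_of_gt (hpos y hy).det_pos))
  have hgA : hess f x * ihess f x = 1 := Matrix.mul_nonsing_inv _ hunit
  -- differentiating the identity
  have hzero : ∀ i j v, (∑ k, (ihess f x i k * T2 f x k j v + hess f x k j * A1 f x i k v)) = 0 := by
    intro i j v
    have hsum : HasFDerivAt (fun y => ∑ k, ihess f y i k * hess f y k j)
        (∑ k, (ihess f x i k • T2 f x k j + hess f x k j • A1 f x i k)) x :=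
      HasFDerivAt.fun_sum fun k _ => (hA'd i k).mul (hT k j)
    have hev : (fun y => ∑ k, ihess f y i k * hess f y k j)
        =ᶠ[nhds x] (fun _ => (1 : Matrix (Fin n) (Fin n) ℝ) i j) := by
      filter_upwards [hΩ.mem_nhds hx] with y hy
      rw [← Matrix.mul_apply, hinv y hy]
    have h0 : HasFDerivAt (fun y => ∑ k, ihess f y i k * hess f y k j)
        (0 : (Fin n → ℝ) →L[ℝ] ℝ) x :=
      (hasFDerivAt_const _ _).congr_of_eventuallyEq hev
    calc (∑ k, (ihess f x i k * T2 f x k j v + hess f x k j * A1 f x i k v))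
        = (∑ k, (ihess f x i k • T2 f x k j + hess f x k j • A1 f x i k)) v := by
          simp [ContinuousLinearMap.sum_apply]
      _ = 0 := by rw [hsum.unique h0]; rfl
  -- the derivative of the inverse Hessian entries
  have hA'v : ∀ i m v, A1 f x i m v
      = -∑ k, ∑ l, ihess f x i k * T2 f x k l v * ihess f x l m := by
    intro i m v
    have h1 : ∀ j, ∑ k, hess f x k j * A1 f x i k v
        = -∑ k, ihess f x i k * T2 f x k j v := by
      intro j
      have h2 := hzero i j v
      rw [Finset.sum_add_distrib] at h2
      linarith
    have h2 : ∀ k, (∑ j, hess f x k j * ihess f x j m) = if k = m then (1:ℝ) else 0 := by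
      intro k
      rw [← Matrix.mul_apply, hgA, Matrix.one_apply]
    calc A1 f x i m v
        = ∑ k, A1 f x i k v * (if k = m then (1:ℝ) else 0) := by
          simp [mul_ite, mul_one, mul_zero, Finset.sum_ite_eq']
      _ = ∑ k, A1 f x i k v * ∑ j, hess f x k j * ihess f x j m := by
          exact Finset.sum_congr rfl fun k _ => by rw [h2 k]
      _ = ∑ j, (∑ k, hess f x k j * A1 f x i k v) * ihess f x j m := by
          simp_rw [Finset.mul_sum]
          rw [Finset.sum_comm]
          refine Finset.sum_congr rfl fun j _ => ?_
          rw [Finset.sum_mul]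
          exact Finset.sum_congr rfl fun k _ => by ring
      _ = ∑ j, (-∑ k, ihess f x i k * T2 f x k j v) * ihess f x j m := by
          exact Finset.sum_congr rfl fun j _ => by rw [h1 j]
      _ = -∑ k, ∑ l, ihess f x i k * T2 f x k l v * ihess f x l m := by
          have hstep : ∀ j, (-∑ k, ihess f x i k * T2 f x k j v) * ihess f x j m
              = ∑ k, -(ihess f x i k * T2 f x k j v * ihess f x j m) := by
            intro j
            rw [neg_mul, Finset.sum_mul, ← Finset.sum_neg_distrib]
          rw [Finset.sum_congr rfl fun j _ => hstep j, Finset.sum_comm]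
          simp only [Finset.sum_neg_distrib]
  -- symmetry of the Hessian
  have hgsymm : ∀ i j, hess f x i j = hess f x j i := fun i j => pd_swap hΩ hf hx i j
  -- symmetry of third derivatives
  have hTswap12 : ∀ a b, T2 f x a b = T2 f x b a := by
    intro a b
    unfold T2
    apply Filter.EventuallyEq.fderiv_eq
    filter_upwards [hΩ.mem_nhds hx] with y hy
    exact pd_swap hΩ hf hy a b
  have hTswap13 : ∀ a b c, T2 f x a b (Pi.single c 1) = T2 f x c b (Pi.single a 1) := by
    intro a b c
    show pd (pd (pd f b) a) c x = pd (pd (pd f b) c) a x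
    exact pd_swap hΩ (hf1 b) hx c a
  have hTswap23 : ∀ a b c, T2 f x a b (Pi.single c 1) = T2 f x a c (Pi.single b 1) := by
    intro a b c
    rw [hTswap13 a b c, hTswap12 c b, hTswap13 b c a]
  -- derivative of first partials
  have hu : ∀ j, HasFDerivAt (pd f j) (fderiv ℝ (pd f j) x) x := fun j =>
    (differentiableAt_of_contDiffOn hΩ (hf1 j) hx).hasFDerivAt
  have huval : ∀ i j, fderiv ℝ (pd f j) x (Pi.single i 1) = hess f x i j := fun i j => rfl
  -- value of the partial derivative of the product
  have hpdF : ∀ i j, pd (fun y => ihess f y i j * Real.sqrt (hess f y).det * pd f j y) i x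
      = (ihess f x i j * ((1 / (2 * Real.sqrt (hess f x).det)) * DdL f x (Pi.single i 1))
          + Real.sqrt (hess f x).det * A1 f x i j (Pi.single i 1)) * pd f j x
        + (ihess f x i j * Real.sqrt (hess f x).det) * hess f x i j := by
    intro i j
    have hprod := ((hA'd i j).fun_mul hS).fun_mul (hu j)
    rw [pd_eq_of_hasFDerivAt hprod]
    simp only [ContinuousLinearMap.add_apply, ContinuousLinearMap.smul_apply, smul_eq_mul,
      huval i j]
    ring
  -- derivative of rho
  have hc2 : ((n:ℝ) + 2) ≠ 0 := by positivity
  have hrho : HasFDerivAt (rho f)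
      ((-(1:ℝ)/(n+2) * (hess f x).det ^ (-(1:ℝ)/(n+2) - 1)) • DdL f x) x := by
    have h1 : HasDerivAt (fun t : ℝ => t ^ (-(1:ℝ)/((n:ℝ)+2)))
        (-(1:ℝ)/(n+2) * (hess f x).det ^ (-(1:ℝ)/(n+2) - 1)) ((hess f x).det) :=
      Real.hasDerivAt_rpow_const (Or.inl hDne)
    exact h1.comp_hasFDerivAt x hdet
  have hpdrho : ∀ i, pd (rho f) i x
      = (-(1:ℝ)/(n+2) * (hess f x).det ^ (-(1:ℝ)/(n+2) - 1)) * DdL f x (Pi.single i 1) := by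
    intro i
    rw [pd_eq_of_hasFDerivAt hrho]
    simp
  -- trace term
  have hP3 : (∑ i, ∑ j, ihess f x i j * hess f x i j) = (n:ℝ) := by
    have h1 : ∀ i, (∑ j, ihess f x i j * hess f x i j)
        = (ihess f x * hess f x) i i := by
      intro i
      rw [Matrix.mul_apply]
      refine Finset.sum_congr rfl fun j _ => ?_
      rw [hgsymm i j]
    rw [Finset.sum_congr rfl fun i _ => h1 i, hinv x hx]
    simp [Matrix.one_apply]
  -- the key contraction identity
  have hkey : ∀ j, (∑ i, A1 f x i j (Pi.single i 1))
      = -(1 / (hess f x).det) * ∑ i, ihess f x i j * DdL f x (Pi.single i 1) := by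
    intro j
    have hL : (∑ i, A1 f x i j (Pi.single i 1))
        = -∑ a, ∑ b, ∑ c, ihess f x a b * T2 f x b c (Pi.single a 1) * ihess f x c j := by
      rw [Finset.sum_congr rfl fun a _ => hA'v a j (Pi.single a 1)]
      rw [Finset.sum_neg_distrib]
    have hR : (∑ i, ihess f x i j * DdL f x (Pi.single i 1))
        = (hess f x).det
          * ∑ a, ∑ b, ∑ c, ihess f x a j * ihess f x c b * T2 f x b c (Pi.single a 1) := by
      rw [Finset.mul_sum]
      refine Finset.sum_congr rfl fun a _ => ?_
      rw [hDd (Pi.single a 1), Finset.mul_sum, Finset.mul_sum]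
      refine Finset.sum_congr rfl fun b _ => ?_
      rw [Finset.mul_sum, Finset.mul_sum]
      refine Finset.sum_congr rfl fun c _ => ?_
      ring
    have hswap : (∑ a, ∑ b, ∑ c, ihess f x a b * T2 f x b c (Pi.single a 1) * ihess f x c j)
        = ∑ a, ∑ b, ∑ c, ihess f x a j * ihess f x c b * T2 f x b c (Pi.single a 1) := by
      rw [sum3_swap (fun a b c => ihess f x a b * T2 f x b c (Pi.single a 1) * ihess f x c j)]
      refine Finset.sum_congr rfl fun a _ => Finset.sum_congr rfl fun b _ =>
        Finset.sum_congr rfl fun c _ => ?_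
      rw [hTswap23 b a c]
      ring
    rw [hL, hswap, hR]
    field_simp
  -- assembling the left-hand side
  have hLHS : (∑ i, ∑ j, pd (fun y => ihess f y i j * Real.sqrt (hess f y).det * pd f j y) i x)
      = (1 / (2 * Real.sqrt (hess f x).det))
          * (∑ i, ∑ j, ihess f x i j * DdL f x (Pi.single i 1) * pd f j x)
        + Real.sqrt (hess f x).det * (∑ i, ∑ j, A1 f x i j (Pi.single i 1) * pd f j x)
        + Real.sqrt (hess f x).det * (∑ i, ∑ j, ihess f x i j * hess f x i j) := by
    calc (∑ i, ∑ j, pd (fun y => ihess f y i j * Real.sqrt (hess f y).det * pd f j y) i x)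
        = ∑ i, ∑ j, ((1 / (2 * Real.sqrt (hess f x).det))
              * (ihess f x i j * DdL f x (Pi.single i 1) * pd f j x)
            + (Real.sqrt (hess f x).det * (A1 f x i j (Pi.single i 1) * pd f j x)
            + Real.sqrt (hess f x).det * (ihess f x i j * hess f x i j))) := by
          refine Finset.sum_congr rfl fun i _ => Finset.sum_congr rfl fun j _ => ?_
          rw [hpdF i j]
          ring
      _ = _ := by
          simp only [Finset.sum_add_distrib, ← Finset.mul_sum]
          ring
  have hP2P1 : (∑ i, ∑ j, A1 f x i j (Pi.single i 1) * pd f j x)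
      = -(1/(hess f x).det)
          * ∑ i, ∑ j, ihess f x i j * DdL f x (Pi.single i 1) * pd f j x := by
    rw [Finset.sum_comm]
    conv_rhs => rw [Finset.sum_comm]
    rw [Finset.mul_sum]
    refine Finset.sum_congr rfl fun j _ => ?_
    rw [← Finset.sum_mul, hkey j, ← Finset.sum_mul]
    ring
  have hRHSsum : (∑ i, ∑ j, ihess f x i j * pd (rho f) i x * pd f j x)
      = (-(1:ℝ)/(n+2) * (hess f x).det ^ (-(1:ℝ)/(n+2) - 1))
          * ∑ i, ∑ j, ihess f x i j * DdL f x (Pi.single i 1) * pd f j x := by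
    rw [Finset.mul_sum]
    refine Finset.sum_congr rfl fun i _ => ?_
    rw [Finset.mul_sum]
    refine Finset.sum_congr rfl fun j _ => ?_
    rw [hpdrho i]
    ring
  -- final computation
  simp only [laplaceBeltrami, gradInner]
  rw [hLHS, hP2P1, hRHSsum]
  rw [show rho f x = (hess f x).det ^ (-(1:ℝ)/((n:ℝ)+2)) from rfl]
  rw [hP3]
  have hpow : (hess f x).det ^ (-(1:ℝ)/((n:ℝ)+2) - 1)
      = (hess f x).det ^ (-(1:ℝ)/((n:ℝ)+2)) / (hess f x).det := by
    rw [Real.rpow_sub hDpos, Real.rpow_one]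
  have hrne : (hess f x).det ^ (-(1:ℝ)/((n:ℝ)+2)) ≠ 0 :=
    ne_of_gt (Real.rpow_pos_of_pos hDpos _)
  rw [hpow]
  set D := (hess f x).det with hDdef
  set S := Real.sqrt D with hSdef
  set P := ∑ i, ∑ j, ihess f x i j * DdL f x (Pi.single i 1) * pd f j x with hPdef
  have key1 : ∀ Q X : ℝ, S⁻¹ * (1 / (2 * S) * Q + S * X) = 1 / (2 * D) * Q + X := by
    intro Q X
    rw [← hSS]
    field_simp
  have hre : 1 / (2 * S) * P + S * (-(1 / D) * P) + S * (n:ℝ)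
      = 1 / (2 * S) * P + S * (-(1 / D) * P + n) := by ring
  rw [hre, key1]
  field_simp
  ring
end
end

section
/- Let Δ be a bounded open polytope in ℝⁿ with Guillemin function v(ξ) = Σₖ δₖ(ξ) log δₖ(ξ). Then there is a constant C > 0 such that det(D²v)(p) ≤ C / d_E(p, ∂Δ)ⁿ for all p ∈ Δ, where d_E(p, ∂Δ) is the Euclidean distance from p to the boundary. -/
open Real MeasureTheory
noncomputable section

/-!
With `δₖ = hₖ - cₖ`, the Hessian of `v` is `∑ₖ δₖ⁻¹ ∇hₖ ∇hₖᵀ`. The hyperplane `{δₖ = 0}` lies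
outside `Δ`, so the distance `d` from `p ∈ Δ` to `∂Δ` satisfies `d · |∇hₖ · u| ≤ δₖ(p) ‖u‖`.
Hence every entry of `d · D²v(p)` is bounded by `B = ∑ₖ ‖∇hₖ‖`, and the Leibniz expansion gives
`dⁿ det D²v(p) = det (d · D²v(p)) ≤ n! Bⁿ`.
-/

open Metric

section NormedSpace

variable {E : Type*} [NormedAddCommGroup E] [NormedSpace ℝ E]

theorem Metric.infDist_frontier_pos [Nontrivial E] {s : Set E} {x : E} (hs : IsOpen s)
    (hsb : Bornology.IsBounded s) (hx : x ∈ s) : 0 < infDist x (frontier s) := by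
  have hs_ne_univ : s ≠ Set.univ := fun h => NormedSpace.unbounded_univ ℝ E (h ▸ hsb)
  have hfr : (frontier s).Nonempty := nonempty_frontier_iff.2 ⟨⟨x, hx⟩, hs_ne_univ⟩
  refine (isClosed_frontier.notMem_iff_infDist_pos hfr).1 fun hxfr => ?_
  exact (hs.frontier_eq ▸ hxfr).2 hx

variable [FiniteDimensional ℝ E]

theorem AffineMap.hasFDerivAt_of_finiteDimensional {F : Type*} [NormedAddCommGroup F]
    [NormedSpace ℝ F] (f : E →ᵃ[ℝ] F) (x : E) :
    HasFDerivAt f (LinearMap.toContinuousLinearMap f.linear) x := by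
  rw [f.decomp]
  exact (LinearMap.toContinuousLinearMap f.linear).hasFDerivAt.add_const (f 0)

theorem Metric.infDist_frontier_le_dist {s : Set E} {x y : E} (hx : x ∈ s) (hy : y ∉ s) :
    infDist x (frontier s) ≤ dist x y := by
  obtain ⟨z, hz, hxz⟩ := exists_mem_frontier_infDist_compl_eq_dist hx
    ((Set.ne_univ_iff_exists_notMem s).2 ⟨y, hy⟩)
  calc infDist x (frontier s) ≤ dist x z := infDist_le_dist_of_mem hz
    _ = infDist x sᶜ := hxz.symm
    _ ≤ dist x y := infDist_le_dist_of_mem hy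

theorem infDist_frontier_mul_abs_linear_le {s : Set E} (f : E →ᵃ[ℝ] ℝ) {c : ℝ}
    (hs : ∀ ξ ∈ s, c < f ξ) {p : E} (hp : p ∈ s) (u : E) :
    infDist p (frontier s) * |f.linear u| ≤ (f p - c) * ‖u‖ := by
  have hfp : 0 < f p - c := sub_pos.2 (hs p hp)
  rcases eq_or_ne (f.linear u) 0 with hu | hu
  · rw [hu, abs_zero, mul_zero]
    positivity
  set t := (f p - c) / f.linear u
  have hlevel : f ((-t) • u +ᵥ p) = c := by
    rw [f.map_vadd, map_smul, vadd_eq_add, smul_eq_mul, neg_mul, div_mul_cancel₀ _ hu]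
    ring
  have hq : (-t) • u +ᵥ p ∉ s := fun hq => (hs _ hq).ne' hlevel
  calc infDist p (frontier s) * |f.linear u|
      ≤ dist p ((-t) • u +ᵥ p) * |f.linear u| := by
        gcongr
        exact infDist_frontier_le_dist hp hq
    _ = (f p - c) * ‖u‖ := by
        rw [dist_comm, dist_vadd_left, norm_smul, norm_neg, Real.norm_eq_abs, abs_div,
          abs_of_pos hfp]
        field_simp

end NormedSpace

theorem Matrix.pow_card_mul_det_le {ι : Type*} [Fintype ι] [DecidableEq ι] (A : Matrix ι ι ℝ)
    {d B : ℝ} (hd : 0 ≤ d) (hA : ∀ i j, d * |A i j| ≤ B) :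
    d ^ Fintype.card ι * A.det ≤ (Fintype.card ι).factorial * B ^ Fintype.card ι := by
  rw [← det_smul]
  have hdA : ∀ i j, |(d • A) i j| ≤ B := fun i j => by
    rw [smul_apply, smul_eq_mul, abs_mul, abs_of_nonneg hd]
    exact hA i j
  simpa using (le_abs_self _).trans (det_le (abv := AbsoluteValue.abs) hdA)

def guillemin {E ι : Type*} [AddCommGroup E] [Module ℝ E] [Fintype ι] (h : ι → E →ᵃ[ℝ] ℝ)
    (c : ι → ℝ) (ξ : E) : ℝ :=
  ∑ k, (h k ξ - c k) * log (h k ξ - c k)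

section Guillemin

variable {E ι : Type*} [Fintype ι] [NormedAddCommGroup E] [NormedSpace ℝ E]
  [FiniteDimensional ℝ E] (h : ι → E →ᵃ[ℝ] ℝ) (c : ι → ℝ)

theorem isOpen_setOf_forall_affine_sub_pos : IsOpen {ξ | ∀ k, 0 < h k ξ - c k} := by
  simp only [Set.ofPred_forall]
  exact isOpen_iInter_of_finite fun k =>
    isOpen_lt continuous_const ((h k).continuous_of_finiteDimensional.sub continuous_const)

theorem hasFDerivAt_guillemin {x : E} (hx : ∀ k, 0 < h k x - c k) :
    HasFDerivAt (guillemin h c)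
      (∑ k, (log (h k x - c k) + 1) • LinearMap.toContinuousLinearMap (h k).linear) x :=
  HasFDerivAt.fun_sum fun k _ => by
    exact (Real.hasDerivAt_mul_log (hx k).ne').comp_hasFDerivAt x
      (((h k).hasFDerivAt_of_finiteDimensional x).sub_const (c k))

end Guillemin

section Hessian

variable {n : ℕ} {ι : Type*} [Fintype ι] (h : ι → (Fin n → ℝ) →ᵃ[ℝ] ℝ) (c : ι → ℝ)

theorem pd_guillemin {x : Fin n → ℝ} (hx : ∀ k, 0 < h k x - c k) (j : Fin n) :
    pd (guillemin h c) j x = ∑ k, (log (h k x - c k) + 1) * (h k).linear (Pi.single j 1) := by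
  simp [pd, (hasFDerivAt_guillemin h c hx).fderiv]

theorem hess_guillemin {p : Fin n → ℝ} (hp : ∀ k, 0 < h k p - c k) (i j : Fin n) :
    hess (guillemin h c) p i j =
      ∑ k, (h k).linear (Pi.single i 1) * (h k).linear (Pi.single j 1) / (h k p - c k) := by
  have hpd : pd (guillemin h c) j =ᶠ[nhds p]
      fun x => ∑ k, (log (h k x - c k) + 1) * (h k).linear (Pi.single j 1) :=
    Filter.eventually_of_mem ((isOpen_setOf_forall_affine_sub_pos h c).mem_nhds hp)
      fun x hx => pd_guillemin h c hx j
  have hderiv : HasFDerivAt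
      (fun x => ∑ k, (log (h k x - c k) + 1) * (h k).linear (Pi.single j 1))
      (∑ k, (h k).linear (Pi.single j 1) •
        (h k p - c k)⁻¹ • LinearMap.toContinuousLinearMap (h k).linear) p :=
    HasFDerivAt.fun_sum fun k _ => (((Real.hasDerivAt_log (hp k).ne').comp_hasFDerivAt p
      (((h k).hasFDerivAt_of_finiteDimensional p).sub_const (c k))).add_const 1).mul_const _
  simp only [hess, Matrix.of_apply, pd, hpd.fderiv_eq, hderiv.fderiv,
    FunLike.coe_sum, Finset.sum_apply, FunLike.coe_smul,
    Pi.smul_apply, smul_eq_mul, LinearMap.coe_toContinuousLinearMap']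
  exact Finset.sum_congr rfl fun k _ => by ring

theorem infDist_frontier_mul_abs_hess_guillemin_le {p : Fin n → ℝ}
    (hp : p ∈ {ξ | ∀ k, 0 < h k ξ - c k}) (i j : Fin n) :
    infDist p (frontier {ξ | ∀ k, 0 < h k ξ - c k}) * |hess (guillemin h c) p i j| ≤
      ∑ k, ‖LinearMap.toContinuousLinearMap (h k).linear‖ := by
  set d := infDist p (frontier {ξ | ∀ k, 0 < h k ξ - c k})
  have hd : 0 ≤ d := infDist_nonneg
  have hterm : ∀ k, d * |(h k).linear (Pi.single i 1) * (h k).linear (Pi.single j 1) /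
      (h k p - c k)| ≤ ‖LinearMap.toContinuousLinearMap (h k).linear‖ := fun k => by
    have hδ : 0 < h k p - c k := hp k
    have hi : d * |(h k).linear (Pi.single i 1)| ≤ h k p - c k := by
      have := infDist_frontier_mul_abs_linear_le (s := {ξ | ∀ k, 0 < h k ξ - c k}) (h k)
        (c := c k) (fun ξ hξ => sub_pos.1 (hξ k)) hp (Pi.single i 1)
      rwa [Pi.norm_single, norm_one, mul_one] at this
    have hj : |(h k).linear (Pi.single j 1)| ≤ ‖LinearMap.toContinuousLinearMap (h k).linear‖ := by
      simpa [Pi.norm_single] using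
        (LinearMap.toContinuousLinearMap (h k).linear).le_opNorm (Pi.single j 1)
    rw [abs_div, abs_mul, abs_of_pos hδ, ← mul_div_assoc, ← mul_assoc, div_le_iff₀ hδ]
    exact (mul_le_mul hi hj (abs_nonneg _) hδ.le).trans_eq (mul_comm _ _)
  rw [hess_guillemin h c hp]
  calc d * |∑ k, (h k).linear (Pi.single i 1) * (h k).linear (Pi.single j 1) / (h k p - c k)|
      ≤ ∑ k, d * |(h k).linear (Pi.single i 1) * (h k).linear (Pi.single j 1) /
          (h k p - c k)| := by
        rw [← Finset.mul_sum]
        exact mul_le_mul_of_nonneg_left (Finset.abs_sum_le_sum_abs _ _) hd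
    _ ≤ _ := Finset.sum_le_sum fun k _ => hterm k

end Hessian

theorem guillemin_det_distance_bound_general
    {n K : ℕ} (h : Fin K → ((Fin n → ℝ) →ᵃ[ℝ] ℝ)) (c : Fin K → ℝ)
    (Δ : Set (Fin n → ℝ)) (hΔ : Δ = {ξ | ∀ k, h k ξ - c k > 0})
    (hbd : Bornology.IsBounded Δ)
    (v : (Fin n → ℝ) → ℝ)
    (hv : ∀ ξ, v ξ = ∑ k, (h k ξ - c k) * Real.log (h k ξ - c k)) :
    ∃ C > 0, ∀ p ∈ Δ,
      (hess v p).det ≤ C / (Metric.infDist p (frontier Δ)) ^ n := by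
  subst hΔ
  obtain rfl : v = guillemin h c := funext hv
  set B := ∑ k, ‖LinearMap.toContinuousLinearMap (h k).linear‖
  refine ⟨n.factorial * (B + 1) ^ n, by positivity, fun p hp => ?_⟩
  have hd : 0 < infDist p (frontier {ξ | ∀ k, h k ξ - c k > 0}) ^ n := by
    rcases n.eq_zero_or_pos with rfl | hn
    · simp
    · have : NeZero n := ⟨hn.ne'⟩
      exact pow_pos (infDist_frontier_pos (isOpen_setOf_forall_affine_sub_pos h c) hbd hp) n
  rw [le_div_iff₀' hd]
  simpa using (hess (guillemin h c) p).pow_card_mul_det_le infDist_nonneg fun i j =>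
    (infDist_frontier_mul_abs_hess_guillemin_le h c hp i j).trans (le_add_of_nonneg_right
      zero_le_one)

/-- for the Guillemin function `v` of a bounded open polytope `Δ`,
`det(D²v)(p) ≤ C / d_E(p, ∂Δ)ⁿ` for all `p ∈ Δ`. -/
theorem guillemin_det_distance_bound
    {n K : ℕ} (h : Fin K → ((Fin n → ℝ) →ᵃ[ℝ] ℝ)) (c : Fin K → ℝ)
    (Δ : Set (Fin n → ℝ)) (hΔ : Δ = {ξ | ∀ k, h k ξ - c k > 0})
    (hbd : Bornology.IsBounded Δ) (hne : Δ.Nonempty)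
    (v : (Fin n → ℝ) → ℝ)
    (hv : ∀ ξ, v ξ = ∑ k, (h k ξ - c k) * Real.log (h k ξ - c k)) :
    ∃ C > 0, ∀ p ∈ Δ,
      (hess v p).det ≤ C / (Metric.infDist p (frontier Δ)) ^ n :=
  guillemin_det_distance_bound_general h c Δ hΔ hbd v hv
end
end
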